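/- arXiv:2409.01621 — 8 statements merged into one kernel-verified Lean document; each statement's English description precedes it below -/
import Mathlib

section
/- Let φ and ψ be real numbers with 0 < φ < π, sin(φ + ψ) ≠ 0 and sin(ψ − φ/2) ≠ 0, and set r = cos(φ/2 + ψ)/cos(φ/2). Then cos(φ) − r·cos(ψ) ≠ 0 and (1 − r²)/(2·(cos(φ) − r·cos(ψ))) = sin(ψ)/(2·cos(φ/2)·sin(ψ − φ/2)). -/
/-!
Write `c = cos (φ/2)`, so `r = cos (φ/2 + ψ) / c`. Both `c · (cos φ - r cos ψ)` and `c² (1 - r²)`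
are differences `cos (u + d) cos u - cos (v + d) cos v`, which product-to-sum turns into
`sin (u + v + d) sin (v - u)`: they equal `sin (φ + ψ) sin (ψ - φ/2)` and `sin (φ + ψ) sin ψ`.
The common factor `sin (φ + ψ)` cancels in the quotient, and `c > 0` because `0 < φ < π`.
-/

open Real

theorem cos_add_mul_cos_sub_cos_add_mul_cos (u v d : ℝ) :
    cos (u + d) * cos u - cos (v + d) * cos v = sin (u + v + d) * sin (v - u) := by
  have prod_to_sum (x : ℝ) : cos (x + d) * cos x = (cos (x + d + x) + cos d) / 2 := by
    rw [cos_add (x + d) x, show d = x + d - x by ring, cos_sub (x + d) x]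
    ring_nf
  rw [prod_to_sum, prod_to_sum, ← sub_div, add_sub_add_right_eq_sub, cos_sub_cos,
    show v - u = -(u - v) by ring, sin_neg]
  ring_nf

/-- For `0 < φ < π`, `sin(φ+ψ) ≠ 0`, `sin(ψ−φ/2) ≠ 0` and `r = cos(φ/2+ψ)/cos(φ/2)`:
`cos φ − r cos ψ ≠ 0` and `(1 − r²)/(2(cos φ − r cos ψ)) = sin ψ/(2 cos(φ/2) sin(ψ − φ/2))`. -/
theorem stmt_2 (φ ψ : ℝ) (h1 : 0 < φ) (h2 : φ < Real.pi)
    (h3 : Real.sin (φ + ψ) ≠ 0) (h4 : Real.sin (ψ - φ / 2) ≠ 0) :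
    Real.cos φ - (Real.cos (φ / 2 + ψ) / Real.cos (φ / 2)) * Real.cos ψ ≠ 0 ∧
    (1 - (Real.cos (φ / 2 + ψ) / Real.cos (φ / 2)) ^ 2) /
        (2 * (Real.cos φ - (Real.cos (φ / 2 + ψ) / Real.cos (φ / 2)) * Real.cos ψ)) =
      Real.sin ψ / (2 * Real.cos (φ / 2) * Real.sin (ψ - φ / 2)) := by
  have hc : cos (φ / 2) ≠ 0 :=
    (cos_pos_of_mem_Ioo ⟨by linarith [pi_pos], by linarith⟩).ne'
  have hden : cos φ - cos (φ / 2 + ψ) / cos (φ / 2) * cos ψ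
      = sin (φ + ψ) * sin (ψ - φ / 2) / cos (φ / 2) := by
    have key : cos φ * cos (φ / 2) - cos (φ / 2 + ψ) * cos ψ = sin (φ + ψ) * sin (ψ - φ / 2) := by
      convert cos_add_mul_cos_sub_cos_add_mul_cos (φ / 2) ψ (φ / 2) using 3 <;> ring_nf
    rw [eq_div_iff hc, ← key]
    field_simp
  have hnum : 1 - (cos (φ / 2 + ψ) / cos (φ / 2)) ^ 2 = sin (φ + ψ) * sin ψ / cos (φ / 2) ^ 2 := by
    have key : cos (φ / 2) ^ 2 - cos (φ / 2 + ψ) ^ 2 = sin (φ + ψ) * sin ψ := by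
      convert cos_add_mul_cos_sub_cos_add_mul_cos (φ / 2) (φ / 2 + ψ) 0 using 2 <;> ring_nf
    rw [eq_div_iff (pow_ne_zero 2 hc), ← key]
    field_simp
  rw [hden, hnum]
  refine ⟨by positivity, ?_⟩
  field_simp
end

section
/- Let φ be a real number with 0 < φ < π, and define x(ψ) = sin(ψ)/(2·cos(φ/2)·sin(ψ − φ/2)) for ψ ∈ [0, π] with ψ ≠ φ/2. Then x is strictly decreasing on the interval [0, φ/2), strictly decreasing on the interval (φ/2, π], satisfies x(ψ) < 0 for ψ ∈ (0, φ/2) and x(ψ) > 0 for ψ ∈ (φ/2, π). Consequently, x is injective on (0, π) \ {φ/2}. -/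
/-!
Writing `a = φ / 2`, we have `x ψ = (2 cos a)⁻¹ · sin ψ / sin (ψ - a)` with `2 cos a > 0`, and the
identity `sin s sin (t - a) - sin t sin (s - a) = sin a sin (t - s)` shows that
`ψ ↦ sin ψ / sin (ψ - a)` decreases between any two points `s < t` with `t - s < π` at which
`sin (· - a)` has the same sign. On `[0, a)` that sign is negative and on `(a, π]` positive.
-/

open Real Set

lemma sin_mul_sin_sub_sub_sin_mul_sin_sub (a s t : ℝ) :
    sin s * sin (t - a) - sin t * sin (s - a) = sin a * sin (t - s) := by
  simp only [sin_sub]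
  ring

lemma sin_div_sin_sub_lt {a s t : ℝ} (ha : 0 < sin a) (hst : 0 < sin (t - s))
    (hsign : 0 < sin (s - a) * sin (t - a)) :
    sin t / sin (t - a) < sin s / sin (s - a) := by
  obtain ⟨hs, ht⟩ := mul_ne_zero_iff.mp hsign.ne'
  have hdiff : sin s / sin (s - a) - sin t / sin (t - a)
      = sin a * sin (t - s) / (sin (s - a) * sin (t - a)) := by
    rw [div_sub_div _ _ hs ht, mul_comm (sin (s - a)) (sin t),
      sin_mul_sin_sub_sub_sin_mul_sin_sub]
  have : 0 < sin s / sin (s - a) - sin t / sin (t - a) := by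
    rw [hdiff]
    positivity
  linarith

section

variable {a : ℝ}

lemma strictAntiOn_sin_div_sin_sub_Ico (ha0 : 0 < a) (haπ : a < π) :
    StrictAntiOn (fun ψ => sin ψ / sin (ψ - a)) (Ico 0 a) := by
  rintro s ⟨hs0, hsa⟩ t ⟨ht0, hta⟩ hst
  refine sin_div_sin_sub_lt (sin_pos_of_pos_of_lt_pi ha0 haπ)
    (sin_pos_of_pos_of_lt_pi (by linarith) (by linarith)) (mul_pos_of_neg_of_neg ?_ ?_)
  · exact sin_neg_of_neg_of_neg_pi_lt (by linarith) (by linarith)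
  · exact sin_neg_of_neg_of_neg_pi_lt (by linarith) (by linarith)

lemma strictAntiOn_sin_div_sin_sub_Ioc (ha0 : 0 < a) (haπ : a < π) :
    StrictAntiOn (fun ψ => sin ψ / sin (ψ - a)) (Ioc a π) := by
  rintro s ⟨has, hsπ⟩ t ⟨hat, htπ⟩ hst
  refine sin_div_sin_sub_lt (sin_pos_of_pos_of_lt_pi ha0 haπ)
    (sin_pos_of_pos_of_lt_pi (by linarith) (by linarith)) (mul_pos ?_ ?_)
  · exact sin_pos_of_pos_of_lt_pi (by linarith) (by linarith)
  · exact sin_pos_of_pos_of_lt_pi (by linarith) (by linarith)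

lemma sin_div_sin_sub_neg (haπ : a < π) {ψ : ℝ} (hψ : ψ ∈ Ioo 0 a) :
    sin ψ / sin (ψ - a) < 0 :=
  div_neg_of_pos_of_neg (sin_pos_of_pos_of_lt_pi hψ.1 (by linarith [hψ.2]))
    (sin_neg_of_neg_of_neg_pi_lt (by linarith [hψ.2]) (by linarith [hψ.1]))

lemma sin_div_sin_sub_pos (ha0 : 0 ≤ a) {ψ : ℝ} (hψ : ψ ∈ Ioo a π) :
    0 < sin ψ / sin (ψ - a) :=
  div_pos (sin_pos_of_pos_of_lt_pi (by linarith [hψ.1]) hψ.2)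
    (sin_pos_of_pos_of_lt_pi (by linarith [hψ.1]) (by linarith [hψ.2]))

lemma injOn_sin_div_sin_sub (ha0 : 0 < a) (haπ : a < π) :
    InjOn (fun ψ => sin ψ / sin (ψ - a)) (Ioo 0 π \ {a}) := by
  have hsplit : Ioo 0 π \ {a} = Ioo 0 a ∪ Ioo a π := by
    ext ψ
    simp only [mem_sdiff, mem_Ioo, mem_singleton_iff, mem_union]
    constructor
    · rintro ⟨⟨h0, hπ⟩, ha⟩
      rcases lt_or_gt_of_ne ha with h | h
      exacts [Or.inl ⟨h0, h⟩, Or.inr ⟨h, hπ⟩]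
    · rintro (⟨h0, h⟩ | ⟨h, hπ⟩)
      exacts [⟨⟨h0, h.trans haπ⟩, h.ne⟩, ⟨⟨ha0.trans h, hπ⟩, h.ne'⟩]
  have hdisj : Disjoint (Ioo 0 a) (Ioo a π) :=
    disjoint_left.2 fun _ h₁ h₂ => h₁.2.not_gt h₂.1
  rw [hsplit, injOn_union hdisj]
  exact ⟨(strictAntiOn_sin_div_sin_sub_Ico ha0 haπ).injOn.mono Ioo_subset_Ico_self,
    (strictAntiOn_sin_div_sin_sub_Ioc ha0 haπ).injOn.mono Ioo_subset_Ioc_self,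
    fun s hs t ht => ((sin_div_sin_sub_neg haπ hs).trans (sin_div_sin_sub_pos ha0.le ht)).ne⟩

end

/-- For `0 < φ < π`, the function `x(ψ) = sin ψ/(2 cos(φ/2) sin(ψ − φ/2))` is strictly
decreasing on `[0, φ/2)` and on `(φ/2, π]`, negative on `(0, φ/2)`, positive on `(φ/2, π)`,
and injective on `(0, π) \ {φ/2}`. -/
theorem stmt_4 (φ : ℝ) (h1 : 0 < φ) (h2 : φ < Real.pi) :
    let x : ℝ → ℝ := fun ψ => Real.sin ψ / (2 * Real.cos (φ / 2) * Real.sin (ψ - φ / 2))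
    StrictAntiOn x (Set.Ico 0 (φ / 2)) ∧
    StrictAntiOn x (Set.Ioc (φ / 2) Real.pi) ∧
    (∀ ψ ∈ Set.Ioo 0 (φ / 2), x ψ < 0) ∧
    (∀ ψ ∈ Set.Ioo (φ / 2) Real.pi, 0 < x ψ) ∧
    Set.InjOn x (Set.Ioo 0 Real.pi \ {φ / 2}) := by
  intro x
  have ha0 : 0 < φ / 2 := by positivity
  have haπ : φ / 2 < π := by linarith
  have hc : 0 < (2 * cos (φ / 2))⁻¹ :=
    inv_pos.2 (mul_pos two_pos (cos_pos_of_mem_Ioo ⟨by linarith, by linarith⟩))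
  have hx : x = fun ψ => (2 * cos (φ / 2))⁻¹ * (sin ψ / sin (ψ - φ / 2)) := by
    funext ψ
    simp only [x]
    ring
  have hscale := strictMono_mul_left_of_pos hc
  rw [hx]
  exact ⟨hscale.comp_strictAntiOn (strictAntiOn_sin_div_sin_sub_Ico ha0 haπ),
    hscale.comp_strictAntiOn (strictAntiOn_sin_div_sin_sub_Ioc ha0 haπ),
    fun ψ hψ => mul_neg_of_pos_of_neg hc (sin_div_sin_sub_neg haπ hψ),
    fun ψ hψ => mul_pos hc (sin_div_sin_sub_pos ha0.le hψ),
    hscale.injective.comp_injOn (injOn_sin_div_sin_sub ha0 haπ)⟩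
end

section
/- Let φ ∈ (0, π) and ψ ∈ [0, π] be real numbers, and set r = cos(φ/2 + ψ)/cos(φ/2). Then the complex number r·cos(φ/2)·e^{i(ψ − φ/2)} − cos(φ) equals 0 if and only if ψ = φ/2. -/
open Real in
lemma aux_real (φ ψ : ℝ) (hφ1 : 0 < φ) (hφ2 : φ < Real.pi)
    (hψ1 : 0 ≤ ψ) (hψ2 : ψ ≤ Real.pi)
    (hA : Real.cos (φ/2+ψ) * Real.cos (ψ-φ/2) = Real.cos φ)
    (hB : Real.cos (φ/2+ψ) * Real.sin (ψ-φ/2) = 0) :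
    ψ = φ/2 := by
  have hA' : Real.cos (2*ψ) = Real.cos φ := by
    have := Real.cos_add (φ/2+ψ) (ψ-φ/2)
    have h2 := Real.cos_sub (φ/2+ψ) (ψ-φ/2)
    have e1 : φ/2+ψ + (ψ-φ/2) = 2*ψ := by ring
    have e2 : φ/2+ψ - (ψ-φ/2) = φ := by ring
    rw [e1] at this; rw [e2] at h2
    nlinarith [Real.sin_sq_add_cos_sq (φ/2+ψ), Real.sin_sq_add_cos_sq (ψ-φ/2)]
  have hB' : Real.sin (2*ψ) = Real.sin φ := by
    have := Real.sin_add (φ/2+ψ) (ψ-φ/2)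
    have h2 := Real.sin_sub (φ/2+ψ) (ψ-φ/2)
    have e1 : φ/2+ψ + (ψ-φ/2) = 2*ψ := by ring
    have e2 : φ/2+ψ - (ψ-φ/2) = φ := by ring
    rw [e1] at this; rw [e2] at h2
    nlinarith
  have hone : Real.cos (2*ψ - φ) = 1 := by
    rw [Real.cos_sub, hA', hB']
    nlinarith [Real.sin_sq_add_cos_sq φ]
  rw [Real.cos_eq_one_iff] at hone
  obtain ⟨n, hn⟩ := hone
  have hpi := Real.pi_pos
  have hb1 : (-1 : ℝ) < n := by
    by_contra h
    push_neg at h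
    have : (n:ℝ) * (2*Real.pi) ≤ -1 * (2*Real.pi) := by
      apply mul_le_mul_of_nonneg_right h; linarith
    nlinarith
  have hb2 : (n:ℝ) < 1 := by
    by_contra h
    push_neg at h
    have : (1:ℝ) * (2*Real.pi) ≤ n * (2*Real.pi) := by
      apply mul_le_mul_of_nonneg_right h; linarith
    nlinarith
  have hn0 : n = 0 := by
    have h1 : (-1:ℤ) < n := by exact_mod_cast hb1
    have h2 : n < 1 := by exact_mod_cast hb2
    omega
  rw [hn0] at hn
  push_cast at hn
  linarith

/-- For `φ ∈ (0, π)`, `ψ ∈ [0, π]` and `r = cos(φ/2 + ψ)/cos(φ/2)`, the complex number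
`r·cos(φ/2)·e^{i(ψ − φ/2)} − cos φ` equals `0` iff `ψ = φ/2`. -/
theorem stmt_5 (φ ψ : ℝ) (hφ1 : 0 < φ) (hφ2 : φ < Real.pi)
    (hψ1 : 0 ≤ ψ) (hψ2 : ψ ≤ Real.pi) :
    ((Real.cos (φ / 2 + ψ) / Real.cos (φ / 2) : ℝ) : ℂ) * (Real.cos (φ / 2) : ℂ) *
          Complex.exp (Complex.I * ((ψ : ℂ) - (φ : ℂ) / 2)) - (Real.cos φ : ℂ) = 0 ↔
      ψ = φ / 2 := by
  have hc : Real.cos (φ/2) ≠ 0 := by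
    apply ne_of_gt
    apply Real.cos_pos_of_mem_Ioo
    constructor <;> [linarith [Real.pi_pos]; linarith]
  have hcc : (Real.cos (φ/2) : ℂ) ≠ 0 := by exact_mod_cast hc
  have hdiv : ((Real.cos (φ / 2 + ψ) / Real.cos (φ / 2) : ℝ) : ℂ) * (Real.cos (φ / 2) : ℂ)
      = (Real.cos (φ/2+ψ) : ℂ) := by
    rw [Complex.ofReal_div, div_mul_cancel₀ _ hcc]
  rw [hdiv]
  have hexp : Complex.exp (Complex.I * ((ψ : ℂ) - (φ : ℂ) / 2))
      = (Real.cos (ψ - φ/2) : ℂ) + (Real.sin (ψ - φ/2) : ℂ) * Complex.I := by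
    rw [mul_comm, Complex.exp_mul_I]
    push_cast
    norm_num
  rw [hexp]
  rw [sub_eq_zero, Complex.ext_iff]
  simp only [Complex.add_re, Complex.add_im, Complex.mul_re, Complex.mul_im,
    Complex.ofReal_re, Complex.ofReal_im, Complex.I_re, Complex.I_im]
  norm_num
  constructor
  · rintro ⟨h1, h2⟩
    exact aux_real φ ψ hφ1 hφ2 hψ1 hψ2 h1 (mul_eq_zero.mpr h2)
  · rintro rfl
    norm_num
end

section
/- Let φ, ψ be real numbers with 0 < φ < π, let a = e^{iφ} and q = (cos(φ/2 + ψ)/cos(φ/2))·e^{iψ}. If qa + q − 2 ≠ 0, then the complex number (q − 1)/(qa + q − 2) is real, i.e. its imaginary part is zero. -/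
/-- For `0 < φ < π`, `a = e^{iφ}` and `q = (cos(φ/2 + ψ)/cos(φ/2))·e^{iψ}` with
`qa + q − 2 ≠ 0`, the complex number `(q − 1)/(qa + q − 2)` is real. -/
theorem stmt_9 (φ ψ : ℝ) (h1 : 0 < φ) (h2 : φ < Real.pi) (a q : ℂ)
    (ha : a = Complex.exp (Complex.I * (φ : ℂ)))
    (hq : q = ((Real.cos (φ / 2 + ψ) / Real.cos (φ / 2) : ℝ) : ℂ) *
      Complex.exp (Complex.I * (ψ : ℂ)))
    (hne : q * a + q - 2 ≠ 0) :
    ((q - 1) / (q * a + q - 2)).im = 0 := by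
  have hc : 0 < Real.cos (φ / 2) := by
    apply Real.cos_pos_of_mem_Ioo
    constructor <;> [linarith [Real.pi_pos]; linarith]
  have key : (q - 1).im * (q * a + q - 2).re = (q - 1).re * (q * a + q - 2).im := by
    subst ha hq
    simp only [mul_comm Complex.I]
    simp only [Complex.exp_mul_I, Complex.mul_re, Complex.mul_im, Complex.add_re,
      Complex.add_im, Complex.sub_re, Complex.sub_im, Complex.one_re, Complex.one_im,
      Complex.ofReal_re, Complex.ofReal_im, Complex.I_re, Complex.I_im,
      Complex.cos_ofReal_re, Complex.cos_ofReal_im, Complex.sin_ofReal_re,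
      Complex.sin_ofReal_im, Complex.re_ofNat, Complex.im_ofNat]
    rw [show φ = 2 * (φ / 2) by ring, Real.sin_two_mul, Real.cos_two_mul]
    rw [show 2 * (φ / 2) / 2 + ψ = φ / 2 + ψ by ring, Real.cos_add]
    rw [show 2 * (φ / 2) / 2 = φ / 2 by ring]
    field_simp
    linear_combination
      (4 * Real.cos (φ/2)^2 * Real.sin ψ^3 * Real.cos ψ
        - 2 * Real.sin (φ/2) * Real.cos (φ/2) * Real.sin ψ^4
        + 4 * Real.cos (φ/2)^2 * Real.sin ψ * Real.cos ψ^3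
        - 2 * Real.sin (φ/2) * Real.cos (φ/2) * Real.sin ψ^2 * Real.cos ψ^2
        - 2 * Real.cos (φ/2)^2 * Real.sin ψ * Real.cos ψ) * Real.sin_sq_add_cos_sq (φ/2)
      + (4 * Real.cos (φ/2)^2 * Real.sin ψ * Real.cos ψ
        - 4 * Real.cos (φ/2)^4 * Real.sin ψ * Real.cos ψ
        - 2 * Real.sin (φ/2) * Real.cos (φ/2) * Real.sin ψ^2
        + 2 * Real.sin (φ/2) * Real.cos (φ/2)^3 * Real.sin ψ^2
        - 2 * Real.sin (φ/2) * Real.cos (φ/2)^3 * Real.cos ψ^2) * Real.sin_sq_add_cos_sq ψ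
  rw [Complex.div_im, key]
  ring
end

section
/- Let φ, ψ be real numbers with 0 < φ < π, and set r = cos(φ/2 + ψ)/cos(φ/2), R = 1/(2·cos(φ/2)) and c = R·e^{−iφ/2}. Then |0 − c| = |1 − c| = |e^{−iφ} − c| = |r·e^{iψ} − c| = R, so the four points 0, 1, e^{−iφ} and r·e^{iψ} lie on the circle with centre c and radius R. Moreover 1 − c ≠ 0 and (e^{iφ} − 1)/(1 − c) = 2i·sin(φ), a purely imaginary number; hence the line through 1 and e^{iφ} is tangent to this circle at the point 1. -/
/-!
The circle through the origin with centre `c` is the polar curve `t = 2 Re(e^{iψ} c̄)`.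
For `c = R e^{-iφ/2}` this reads `t = 2R cos(φ/2 + ψ) = r`, so the circle carries `r e^{iψ}`
for every `ψ`; the cases `ψ = 0` and `ψ = -φ` give the points `1` and `e^{-iφ}`.
For the tangency, `1 - c = e^{iφ/2} / (2 cos(φ/2))` while `e^{iφ} - 1 = 2i sin(φ/2) e^{iφ/2}`.
-/

open Complex ComplexConjugate

theorem Complex.norm_polar_sub_eq_norm (c : ℂ) (ψ : ℝ) :
    ‖((2 * (exp (ψ * I) * conj c).re : ℝ) : ℂ) * exp (ψ * I) - c‖ = ‖c‖ := by
  rw [← sq_eq_sq₀ (norm_nonneg _) (norm_nonneg _), ← normSq_eq_norm_sq, ← normSq_eq_norm_sq,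
    normSq_sub, mul_assoc, re_ofReal_mul, normSq_mul, normSq_ofReal, normSq_eq_norm_sq,
    norm_exp_ofReal_mul_I]
  ring

theorem Complex.norm_cos_div_cos_mul_exp_sub (t ψ : ℝ) (ht : Real.cos t ≠ 0) :
    ‖((Real.cos (t + ψ) / Real.cos t : ℝ) : ℂ) * exp (ψ * I) -
        ((1 / (2 * Real.cos t) : ℝ) : ℂ) * exp (-(t * I))‖ =
      ‖((1 / (2 * Real.cos t) : ℝ) : ℂ) * exp (-(t * I))‖ := by
  convert norm_polar_sub_eq_norm _ ψ using 5
  rw [map_mul, conj_ofReal, ← exp_conj, map_neg, map_mul, conj_ofReal, conj_I, mul_neg, neg_neg,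
    mul_left_comm, ← exp_add, ← add_mul, ← ofReal_add, re_ofReal_mul, exp_ofReal_mul_I_re,
    add_comm ψ]
  field_simp

theorem Complex.exp_mul_I_sub_one (θ : ℂ) (hcos : cos (θ / 2) ≠ 0) :
    exp (θ * I) - 1 = 2 * I * sin θ * (1 - 1 / (2 * cos (θ / 2)) * exp (-(θ / 2 * I))) := by
  obtain ⟨t, rfl⟩ : ∃ t, θ = 2 * t := ⟨θ / 2, by ring⟩
  rw [mul_div_cancel_left₀ t two_ne_zero] at hcos ⊢
  have hinv : exp (t * I) * exp (-(t * I)) = 1 := by rw [← exp_add]; simp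
  have h2cos : 2 * cos t = exp (t * I) + exp (-(t * I)) := by rw [cos, neg_mul]; ring
  have h2sin : 2 * sin t = (exp (-(t * I)) - exp (t * I)) * I := by rw [sin, neg_mul]; ring
  rw [sin_two_mul, mul_assoc, two_mul (t * I), exp_add]
  field_simp
  linear_combination hinv - 2 * I * sin t * h2cos - I * exp (t * I) * h2sin +
    (exp (t * I) ^ 2 - exp (t * I) * exp (-(t * I))) * I_sq

/-- For `0 < φ < π`, with `r = cos(φ/2 + ψ)/cos(φ/2)`, `R = 1/(2cos(φ/2))` and
`c = R·e^{−iφ/2}`: the points `0, 1, e^{−iφ}, r·e^{iψ}` lie on the circle of centre `c`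
and radius `R`; moreover `1 − c ≠ 0` and `(e^{iφ} − 1)/(1 − c) = 2i·sin φ` is purely
imaginary, so the line through `1` and `e^{iφ}` is tangent to this circle at `1`. -/
theorem stmt_13 (φ ψ : ℝ) (h1 : 0 < φ) (h2 : φ < Real.pi) :
    let r : ℝ := Real.cos (φ / 2 + ψ) / Real.cos (φ / 2)
    let R : ℝ := 1 / (2 * Real.cos (φ / 2))
    let c : ℂ := (R : ℂ) * Complex.exp (-(Complex.I * ((φ : ℂ) / 2)))
    ‖0 - c‖ = R ∧
    ‖1 - c‖ = R ∧
    ‖Complex.exp (-(Complex.I * (φ : ℂ))) - c‖ = R ∧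
    ‖(r : ℂ) * Complex.exp (Complex.I * (ψ : ℂ)) - c‖ = R ∧
    (1 : ℂ) - c ≠ 0 ∧
    (Complex.exp (Complex.I * (φ : ℂ)) - 1) / (1 - c) =
      2 * Complex.I * (Real.sin φ : ℂ) := by
  intro r R c
  have hcos : 0 < Real.cos (φ / 2) :=
    Real.cos_pos_of_mem_Ioo ⟨by linarith [Real.pi_pos], by linarith⟩
  have hc : c = ((1 / (2 * Real.cos (φ / 2)) : ℝ) : ℂ) * exp (-((φ / 2 : ℝ) * I)) := by
    simp only [c, R]; push_cast; ring_nf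
  have hR : ‖c‖ = R := by
    rw [hc, norm_mul, ← neg_mul, ← ofReal_neg, norm_exp_ofReal_mul_I, mul_one, norm_real,
      Real.norm_of_nonneg (by positivity)]
  have on_circle (θ : ℝ) :
      ‖((Real.cos (φ / 2 + θ) / Real.cos (φ / 2) : ℝ) : ℂ) * exp (θ * I) - c‖ = R := by
    rw [← hR, hc]
    exact norm_cos_div_cos_mul_exp_sub _ θ hcos.ne'
  have hone : ‖1 - c‖ = R := by simpa [hcos.ne'] using on_circle 0
  have hne : 1 - c ≠ 0 := by
    rw [← norm_pos_iff, hone]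
    positivity
  refine ⟨by rw [zero_sub, norm_neg, hR], hone, ?_, by simpa only [mul_comm I] using on_circle ψ,
    hne, ?_⟩
  · have h := on_circle (-φ)
    rw [show φ / 2 + -φ = -(φ / 2) by ring, Real.cos_neg, div_self hcos.ne'] at h
    simpa [mul_comm I] using h
  · have hcos' : cos ((φ : ℂ) / 2) ≠ 0 := by exact_mod_cast hcos.ne'
    rw [div_eq_iff hne, hc, mul_comm I, exp_mul_I_sub_one _ hcos']
    push_cast
    ring_nf
end

section
/- Let φ be a real number with 0 < φ < π. Then there exists a unique ψ ∈ (0, π) satisfying sin(ψ) + 2·sin(ψ − φ/2)·cos(φ/2) = 0; this unique solution is ψ₁(φ) = arctan(sin(φ)/(2 + cos(φ))), and it lies in the open interval (0, φ/2). -/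
/-- For `0 < φ < π` there is a unique `ψ ∈ (0, π)` with
`sin ψ + 2 sin(ψ − φ/2) cos(φ/2) = 0`; this solution is
`ψ₁(φ) = arctan(sin φ/(2 + cos φ))`, and it lies in `(0, φ/2)`. -/
theorem stmt_14 (φ : ℝ) (h1 : 0 < φ) (h2 : φ < Real.pi) :
    (∃! ψ : ℝ, ψ ∈ Set.Ioo 0 Real.pi ∧
      Real.sin ψ + 2 * Real.sin (ψ - φ / 2) * Real.cos (φ / 2) = 0) ∧
    (Real.sin (Real.arctan (Real.sin φ / (2 + Real.cos φ))) +
        2 * Real.sin (Real.arctan (Real.sin φ / (2 + Real.cos φ)) - φ / 2) *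
          Real.cos (φ / 2) = 0) ∧
    Real.arctan (Real.sin φ / (2 + Real.cos φ)) ∈ Set.Ioo 0 (φ / 2) := by
  have hpi := Real.pi_pos
  have hs : 0 < Real.sin φ := Real.sin_pos_of_pos_of_lt_pi h1 h2
  have hc : (0:ℝ) < 2 + Real.cos φ := by nlinarith [Real.neg_one_le_cos φ]
  set a := Real.sin φ / (2 + Real.cos φ) with ha
  have hapos : 0 < a := div_pos hs hc
  have haeq : a * (2 + Real.cos φ) = Real.sin φ := div_mul_cancel₀ _ (ne_of_gt hc)
  have hcoshalf : 0 < Real.cos (φ / 2) :=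
    Real.cos_pos_of_mem_Ioo ⟨by linarith, by linarith⟩
  have hsinhalf : 0 < Real.sin (φ / 2) :=
    Real.sin_pos_of_pos_of_lt_pi (by linarith) (by linarith)
  have hcosφ : Real.cos φ = 2 * Real.cos (φ / 2) ^ 2 - 1 := by
    have := Real.cos_two_mul (φ / 2); rwa [show 2 * (φ / 2) = φ by ring] at this
  have hsinφ : Real.sin φ = 2 * Real.sin (φ / 2) * Real.cos (φ / 2) := by
    have := Real.sin_two_mul (φ / 2); rw [show 2 * (φ / 2) = φ by ring] at this
    linarith
  have key : ∀ ψ : ℝ, Real.sin ψ + 2 * Real.sin (ψ - φ / 2) * Real.cos (φ / 2)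
      = Real.sin ψ * (2 + Real.cos φ) - Real.cos ψ * Real.sin φ := by
    intro ψ
    rw [Real.sin_sub, hcosφ, hsinφ]; ring
  have hsa : Real.sin (Real.arctan a) = a * Real.cos (Real.arctan a) := by
    rw [Real.sin_arctan, Real.cos_arctan]; ring
  have hsol : Real.sin (Real.arctan a) +
      2 * Real.sin (Real.arctan a - φ / 2) * Real.cos (φ / 2) = 0 := by
    rw [key, hsa]
    linear_combination Real.cos (Real.arctan a) * haeq
  have hmem : Real.arctan a ∈ Set.Ioo 0 (φ / 2) := by
    constructor
    · have := Real.arctan_strictMono hapos; rwa [Real.arctan_zero] at this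
    · have htan : a < Real.tan (φ / 2) := by
        rw [Real.tan_eq_sin_div_cos, ha, div_lt_div_iff₀ hc hcoshalf]
        rw [hsinφ, hcosφ]; nlinarith
      have := Real.arctan_strictMono htan
      rwa [Real.arctan_tan (by linarith) (by linarith)] at this
  refine ⟨⟨Real.arctan a, ⟨⟨hmem.1, by linarith [hmem.2, Real.arctan_lt_pi_div_two a]⟩, hsol⟩, ?_⟩,
    hsol, hmem⟩
  rintro ψ ⟨⟨hψ0, hψπ⟩, heq⟩
  rw [key] at heq
  have hsψ : 0 < Real.sin ψ := Real.sin_pos_of_pos_of_lt_pi hψ0 hψπ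
  have hcψ : 0 < Real.cos ψ := by nlinarith
  have hψlt : ψ < Real.pi / 2 := by
    by_contra hle
    push_neg at hle
    have : Real.cos ψ ≤ 0 := Real.cos_nonpos_of_pi_div_two_le_of_le hle (by linarith)
    linarith
  have htanψ : Real.tan ψ = a := by
    rw [Real.tan_eq_sin_div_cos, ha, div_eq_div_iff (ne_of_gt hcψ) (ne_of_gt hc)]
    linarith
  calc ψ = Real.arctan (Real.tan ψ) := (Real.arctan_tan (by linarith) hψlt).symm
    _ = Real.arctan a := by rw [htanψ]
end

section
/- Let φ be a real number with 0 < φ < π. Then there exists a unique ψ ∈ (0, π) satisfying sin(ψ)·cos(φ) − 2·sin(ψ − φ/2)·cos(φ/2) = 0; this unique solution is ψ₂(φ) = arctan(sin(φ)), and it lies in the open interval (0, π/2). -/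
open Real in
lemma stmt_15_key (φ ψ : ℝ) :
    Real.sin ψ * Real.cos φ - 2 * Real.sin (ψ - φ / 2) * Real.cos (φ / 2)
      = Real.sin φ * Real.cos ψ - Real.sin ψ := by
  have h1 : Real.cos φ = 2 * Real.cos (φ / 2) ^ 2 - 1 := by
    have := Real.cos_sq (φ / 2)
    rw [show 2 * (φ / 2) = φ by ring] at this
    linarith
  have h2 : Real.sin φ = 2 * Real.sin (φ / 2) * Real.cos (φ / 2) := by
    have := Real.sin_two_mul (φ / 2)
    rw [show 2 * (φ / 2) = φ by ring] at this
    linarith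
  rw [Real.sin_sub, h1, h2]
  have := Real.sin_sq_add_cos_sq (φ / 2)
  nlinarith [this]

open Real in
lemma stmt_15_uniq (φ : ℝ) (h1 : 0 < φ) (h2 : φ < Real.pi) (ψ : ℝ)
    (hψ : ψ ∈ Set.Ioo 0 Real.pi)
    (heq : Real.sin ψ * Real.cos φ - 2 * Real.sin (ψ - φ / 2) * Real.cos (φ / 2) = 0) :
    ψ = Real.arctan (Real.sin φ) := by
  rw [stmt_15_key] at heq
  have hsφ : 0 < Real.sin φ := Real.sin_pos_of_pos_of_lt_pi h1 h2
  have hsψ : 0 < Real.sin ψ := Real.sin_pos_of_pos_of_lt_pi hψ.1 hψ.2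
  have hcψ : 0 < Real.cos ψ := by nlinarith
  have hψlt : ψ < Real.pi / 2 := by
    by_contra h
    push_neg at h
    have : Real.cos ψ ≤ 0 := Real.cos_nonpos_of_pi_div_two_le_of_le h (by linarith [hψ.2, Real.pi_pos])
    linarith
  have htan : Real.tan ψ = Real.sin φ := by
    rw [Real.tan_eq_sin_div_cos]
    field_simp
    linarith
  rw [← htan, Real.arctan_tan (by linarith [hψ.1, Real.pi_pos]) hψlt]

/-- For `0 < φ < π` there is a unique `ψ ∈ (0, π)` with
`sin ψ cos φ − 2 sin(ψ − φ/2) cos(φ/2) = 0`; this solution is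
`ψ₂(φ) = arctan(sin φ)`, and it lies in `(0, π/2)`. -/
theorem stmt_15 (φ : ℝ) (h1 : 0 < φ) (h2 : φ < Real.pi) :
    (∃! ψ : ℝ, ψ ∈ Set.Ioo 0 Real.pi ∧
      Real.sin ψ * Real.cos φ - 2 * Real.sin (ψ - φ / 2) * Real.cos (φ / 2) = 0) ∧
    (Real.sin (Real.arctan (Real.sin φ)) * Real.cos φ -
        2 * Real.sin (Real.arctan (Real.sin φ) - φ / 2) * Real.cos (φ / 2) = 0) ∧
    Real.arctan (Real.sin φ) ∈ Set.Ioo 0 (Real.pi / 2) := by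
  have hsφ : 0 < Real.sin φ := Real.sin_pos_of_pos_of_lt_pi h1 h2
  set ψ₀ := Real.arctan (Real.sin φ) with hψ₀
  have hmem : ψ₀ ∈ Set.Ioo 0 (Real.pi / 2) :=
    ⟨by rw [← Real.arctan_zero]; exact Real.arctan_strictMono hsφ, Real.arctan_lt_pi_div_two _⟩
  have heq0 : Real.sin ψ₀ * Real.cos φ - 2 * Real.sin (ψ₀ - φ / 2) * Real.cos (φ / 2) = 0 := by
    rw [stmt_15_key]
    have hc : 0 < Real.cos ψ₀ := Real.cos_pos_of_mem_Ioo
      ⟨by linarith [hmem.1, Real.pi_pos], hmem.2⟩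
    have ht : Real.tan ψ₀ = Real.sin φ := Real.tan_arctan _
    rw [Real.tan_eq_sin_div_cos] at ht
    field_simp at ht
    linarith
  refine ⟨⟨ψ₀, ⟨⟨hmem.1, by linarith [hmem.2, Real.pi_pos]⟩, heq0⟩, ?_⟩, heq0, hmem⟩
  rintro ψ ⟨hψ, heq⟩
  exact stmt_15_uniq φ h1 h2 ψ hψ heq
end

section
/- The Farey coordinate η is a continuous, strictly increasing bijection from the interval [0, 1] onto itself. -/
def fareySum (a b : ℚ) : ℚ :=
  ((a.num + b.num : ℤ) : ℚ) / (((a.den + b.den : ℕ) : ℚ))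

def fareyDyadic : ℕ → ℕ → ℚ
  | 0, 0 => 0
  | 0, _ + 1 => 1
  | n + 1, m =>
    if m % 2 = 0 then fareyDyadic n (m / 2)
    else fareySum (fareyDyadic n (m / 2)) (fareyDyadic n (m / 2 + 1))

/-- Adjacency (unimodularity) predicate with denominator-sum bound. -/
def AdjN (n : ℕ) (a b : ℚ) : Prop :=
  0 ≤ a.num ∧ b.num * (a.den : ℤ) - a.num * (b.den : ℤ) = 1 ∧ n + 2 ≤ a.den + b.den

lemma fareySum_num_den {a b : ℚ} (h : b.num * (a.den : ℤ) - a.num * (b.den : ℤ) = 1) :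
    (fareySum a b).num = a.num + b.num ∧ (fareySum a b).den = a.den + b.den := by
  have hb0 : (0 : ℤ) < ((a.den + b.den : ℕ) : ℤ) := by
    positivity
  have hcop : IsCoprime (a.num + b.num) ((a.den + b.den : ℕ) : ℤ) := by
    refine ⟨-(b.den : ℤ), b.num, ?_⟩
    push_cast
    linarith [h]
  have hcop' : Nat.Coprime (a.num + b.num).natAbs ((a.den + b.den : ℕ) : ℤ).natAbs :=
    Int.isCoprime_iff_gcd_eq_one.mp hcop
  have heq : fareySum a b =
      ((a.num + b.num : ℤ) : ℚ) / ((((a.den + b.den : ℕ) : ℤ)) : ℚ) := by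
    rw [fareySum]; norm_cast
  constructor
  · rw [heq]; exact Rat.num_div_eq_of_coprime hb0 hcop'
  · have := Rat.den_div_eq_of_coprime hb0 hcop'
    rw [heq]
    exact_mod_cast this

lemma fareyDyadic_even (n m : ℕ) : fareyDyadic (n+1) (2*m) = fareyDyadic n m := by
  simp [fareyDyadic, Nat.mul_mod_right, Nat.mul_div_cancel_left]

lemma fareyDyadic_odd (n m : ℕ) :
    fareyDyadic (n+1) (2*m+1) = fareySum (fareyDyadic n m) (fareyDyadic n (m+1)) := by
  have h1 : (2*m+1) % 2 = 1 := by omega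
  have h2 : (2*m+1) / 2 = m := by omega
  simp [fareyDyadic, h1, h2]

lemma adjN_main : ∀ n m : ℕ, m < 2^n → AdjN n (fareyDyadic n m) (fareyDyadic n (m+1)) := by
  intro n
  induction n with
  | zero =>
    intro m hm
    interval_cases m
    refine ⟨?_, ?_, ?_⟩ <;> simp [fareyDyadic]
  | succ n ih =>
    intro m hm
    rcases Nat.even_or_odd m with he | ho
    · obtain ⟨k, hk⟩ := he
      have hk2 : m = 2 * k := by omega
      have hklt : k < 2^n := by
        have : 2 * k < 2 * 2^n := by rw [← hk2]; simpa [pow_succ, mul_comm] using hm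
        omega
      obtain ⟨h0, h1, h2⟩ := ih k hklt
      obtain ⟨hnum, hden⟩ := fareySum_num_den h1
      have hd1 : 1 ≤ (fareyDyadic n k).den := (fareyDyadic n k).pos
      rw [hk2]
      have e1 : fareyDyadic (n+1) (2*k) = fareyDyadic n k := fareyDyadic_even n k
      have e2 : fareyDyadic (n+1) (2*k+1)
          = fareySum (fareyDyadic n k) (fareyDyadic n (k+1)) := fareyDyadic_odd n k
      refine ⟨by rw [e1]; exact h0, ?_, ?_⟩
      · rw [e1, e2, hnum, hden]
        push_cast
        linarith
      · rw [e1, e2, hden]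
        omega
    · obtain ⟨k, hk⟩ := ho
      have hklt : k < 2^n := by
        have : 2 * k + 1 < 2 * 2^n := by rw [← hk]; simpa [pow_succ, mul_comm] using hm
        omega
      obtain ⟨h0, h1, h2⟩ := ih k hklt
      obtain ⟨hnum, hden⟩ := fareySum_num_den h1
      have hd1 : 1 ≤ (fareyDyadic n k).den := (fareyDyadic n k).pos
      have hd2 : 1 ≤ (fareyDyadic n (k+1)).den := (fareyDyadic n (k+1)).pos
      have hbnum : 0 < (fareyDyadic n (k+1)).num := by
        nlinarith [h1, hd1, hd2]
      rw [hk]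
      have e1 : fareyDyadic (n+1) (2*k+1)
          = fareySum (fareyDyadic n k) (fareyDyadic n (k+1)) := fareyDyadic_odd n k
      have e2 : fareyDyadic (n+1) (2*k+1+1) = fareyDyadic n (k+1) := by
        have : 2*k+1+1 = 2*(k+1) := by ring
        rw [this]; exact fareyDyadic_even n (k+1)
      refine ⟨?_, ?_, ?_⟩
      · rw [e1, hnum]; omega
      · rw [e1, e2, hnum, hden]
        push_cast
        linarith
      · rw [e1, e2, hden]
        omega

lemma fareyDyadic_zero (n : ℕ) : fareyDyadic n 0 = 0 := by
  induction n with
  | zero => rfl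
  | succ n ih => have := fareyDyadic_even n 0; simpa [ih] using this

lemma fareyDyadic_top (n : ℕ) : fareyDyadic n (2^n) = 1 := by
  induction n with
  | zero => rfl
  | succ n ih =>
    have h : 2^(n+1) = 2 * 2^n := by ring
    rw [h, fareyDyadic_even, ih]

lemma fd_step_lt {n m : ℕ} (h : m < 2^n) : fareyDyadic n m < fareyDyadic n (m+1) := by
  obtain ⟨h0, h1, h2⟩ := adjN_main n m h
  set a := fareyDyadic n m
  set b := fareyDyadic n (m+1)
  have hda : (0:ℚ) < (a.den : ℚ) := by exact_mod_cast a.pos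
  have hdb : (0:ℚ) < (b.den : ℚ) := by exact_mod_cast b.pos
  have key : (b - a) * ((a.den : ℚ) * (b.den : ℚ)) = 1 := by
    have ha := Rat.num_div_den a
    have hb := Rat.num_div_den b
    have h1' : ((b.num : ℚ) * (a.den : ℚ) - (a.num : ℚ) * (b.den : ℚ)) = 1 := by
      exact_mod_cast h1
    calc (b - a) * ((a.den : ℚ) * (b.den : ℚ))
        = ((b.num : ℚ)/(b.den:ℚ) - (a.num:ℚ)/(a.den:ℚ)) * ((a.den : ℚ) * (b.den : ℚ)) := by
          rw [ha, hb]
      _ = (b.num : ℚ) * (a.den : ℚ) - (a.num : ℚ) * (b.den : ℚ) := by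
          field_simp
      _ = 1 := h1'
  nlinarith [key, hda, hdb, mul_pos hda hdb]

lemma fd_step_gap {n m : ℕ} (h : m < 2^n) :
    fareyDyadic n (m+1) ≤ fareyDyadic n m + 1 / (n+1 : ℚ) := by
  obtain ⟨h0, h1, h2⟩ := adjN_main n m h
  set a := fareyDyadic n m
  set b := fareyDyadic n (m+1)
  have hda : (0:ℚ) < (a.den : ℚ) := by exact_mod_cast a.pos
  have hdb : (0:ℚ) < (b.den : ℚ) := by exact_mod_cast b.pos
  have key : (b - a) * ((a.den : ℚ) * (b.den : ℚ)) = 1 := by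
    have ha := Rat.num_div_den a
    have hb := Rat.num_div_den b
    have h1' : ((b.num : ℚ) * (a.den : ℚ) - (a.num : ℚ) * (b.den : ℚ)) = 1 := by
      exact_mod_cast h1
    calc (b - a) * ((a.den : ℚ) * (b.den : ℚ))
        = ((b.num : ℚ)/(b.den:ℚ) - (a.num:ℚ)/(a.den:ℚ)) * ((a.den : ℚ) * (b.den : ℚ)) := by
          rw [Rat.num_div_den a, Rat.num_div_den b]
      _ = (b.num : ℚ) * (a.den : ℚ) - (a.num : ℚ) * (b.den : ℚ) := by
          field_simp
      _ = 1 := h1'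
  have hprod : (n + 1 : ℕ) ≤ a.den * b.den := by
    have ha1 : 1 ≤ a.den := a.pos
    have hb1 : 1 ≤ b.den := b.pos
    nlinarith [h2]
  have hprod' : (n + 1 : ℚ) ≤ (a.den : ℚ) * (b.den : ℚ) := by exact_mod_cast hprod
  have hn1 : (0:ℚ) < (n+1 : ℚ) := by positivity
  have hba : b - a = 1 / ((a.den : ℚ) * (b.den : ℚ)) := by
    rw [eq_div_iff (ne_of_gt (mul_pos hda hdb))]
    exact key
  have : 1 / ((a.den : ℚ) * (b.den : ℚ)) ≤ 1 / (n+1 : ℚ) :=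
    one_div_le_one_div_of_le hn1 hprod'
  linarith

lemma fd_le_step {n : ℕ} {m m' : ℕ} (h : m ≤ m') (h' : m' ≤ 2^n) :
    fareyDyadic n m ≤ fareyDyadic n m' := by
  induction m' with
  | zero => simp_all
  | succ k ih =>
    rcases Nat.lt_or_ge m (k+1) with hlt | hge
    · have h1 : fareyDyadic n m ≤ fareyDyadic n k := ih (by omega) (by omega)
      have h2 : fareyDyadic n k < fareyDyadic n (k+1) := fd_step_lt (by omega)
      linarith
    · have : m = k + 1 := by omega
      rw [this]

lemma fd_lt_fd {n : ℕ} {m m' : ℕ} (h : m < m') (h' : m' ≤ 2^n) :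
    fareyDyadic n m < fareyDyadic n m' := by
  have h1 : fareyDyadic n m < fareyDyadic n (m+1) := fd_step_lt (by omega)
  have h2 : fareyDyadic n (m+1) ≤ fareyDyadic n m' := fd_le_step (by omega) h'
  linarith

lemma fd_lift (n j m : ℕ) : fareyDyadic (n+j) (m * 2^j) = fareyDyadic n m := by
  induction j with
  | zero => simp
  | succ j ih =>
    have h : m * 2^(j+1) = 2 * (m * 2^j) := by ring
    have : n + (j+1) = (n + j) + 1 := by ring
    rw [h, this, fareyDyadic_even, ih]

lemma fd_mono_cross {n m N k : ℕ} (hm : m ≤ 2^n) (hk : k ≤ 2^N)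
    (h : m * 2^N ≤ k * 2^n) : fareyDyadic n m ≤ fareyDyadic N k := by
  set L := max n N
  have hnL : n ≤ L := le_max_left _ _
  have hNL : N ≤ L := le_max_right _ _
  have h1 : 2^(L-n) * 2^n = 2^L := by rw [← pow_add]; congr 1; omega
  have h2 : 2^(L-N) * 2^N = 2^L := by rw [← pow_add]; congr 1; omega
  have e1 : fareyDyadic L (m * 2^(L-n)) = fareyDyadic n m := by
    have := fd_lift n (L-n) m
    rwa [Nat.add_sub_cancel' hnL] at this
  have e2 : fareyDyadic L (k * 2^(L-N)) = fareyDyadic N k := by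
    have := fd_lift N (L-N) k
    rwa [Nat.add_sub_cancel' hNL] at this
  rw [← e1, ← e2]
  apply fd_le_step
  · have hmul : m * 2^(L-n) * (2^n * 2^N) ≤ k * 2^(L-N) * (2^n * 2^N) := by
      calc m * 2^(L-n) * (2^n * 2^N) = (m * 2^N) * (2^(L-n) * 2^n) := by ring
        _ = (m * 2^N) * 2^L := by rw [h1]
        _ ≤ (k * 2^n) * 2^L := by exact Nat.mul_le_mul_right _ h
        _ = k * 2^(L-N) * (2^n * 2^N) := by rw [← h2]; ring
    exact Nat.le_of_mul_le_mul_right hmul (by positivity)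
  · calc k * 2^(L-N) ≤ 2^N * 2^(L-N) := Nat.mul_le_mul_right _ hk
      _ = 2^L := by rw [← pow_add]; congr 1; omega

lemma fd_nonneg {n m : ℕ} (hm : m ≤ 2^n) : (0:ℚ) ≤ fareyDyadic n m := by
  have := fd_le_step (Nat.zero_le m) hm
  rwa [fareyDyadic_zero] at this

lemma fd_le_one {n m : ℕ} (hm : m ≤ 2^n) : fareyDyadic n m ≤ 1 := by
  have := fd_le_step hm (le_refl (2^n))
  rwa [fareyDyadic_top] at this

noncomputable def fareyCoord (α : ℝ) : ℝ :=
  sSup {x : ℝ | ∃ n m : ℕ, m ≤ 2 ^ n ∧ (m : ℝ) / 2 ^ n ≤ α ∧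
    x = ((fareyDyadic n m : ℚ) : ℝ)}

lemma bddAbove_fareySet (α : ℝ) :
    BddAbove {x : ℝ | ∃ n m : ℕ, m ≤ 2 ^ n ∧ (m : ℝ) / 2 ^ n ≤ α ∧
      x = ((fareyDyadic n m : ℚ) : ℝ)} := by
  refine ⟨1, ?_⟩
  rintro x ⟨n, m, hm, _, rfl⟩
  exact_mod_cast fd_le_one hm

lemma nonempty_fareySet {α : ℝ} (h : 0 ≤ α) :
    Set.Nonempty {x : ℝ | ∃ n m : ℕ, m ≤ 2 ^ n ∧ (m : ℝ) / 2 ^ n ≤ α ∧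
      x = ((fareyDyadic n m : ℚ) : ℝ)} := by
  refine ⟨((fareyDyadic 0 0 : ℚ) : ℝ), 0, 0, by norm_num, by simpa using h, rfl⟩

lemma le_fareyCoord {N k : ℕ} {α : ℝ} (hk : k ≤ 2^N) (h : (k : ℝ) / 2^N ≤ α) :
    ((fareyDyadic N k : ℚ) : ℝ) ≤ fareyCoord α :=
  le_csSup (bddAbove_fareySet α) ⟨N, k, hk, h, rfl⟩

lemma fareyCoord_le {N k : ℕ} {α : ℝ} (hα : 0 ≤ α) (hk : k ≤ 2^N)
    (h : α ≤ (k : ℝ) / 2^N) : fareyCoord α ≤ ((fareyDyadic N k : ℚ) : ℝ) := by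
  apply csSup_le (nonempty_fareySet hα)
  rintro x ⟨n, m, hm, hle, rfl⟩
  have hC : (m : ℝ) / 2^n ≤ (k : ℝ) / 2^N := le_trans hle h
  have hnat : m * 2^N ≤ k * 2^n := by
    have h2n : (0:ℝ) < 2^n := by positivity
    have h2N : (0:ℝ) < 2^N := by positivity
    have := (div_le_div_iff₀ h2n h2N).mp hC
    exact_mod_cast this
  exact_mod_cast fd_mono_cross hm hk hnat

lemma fareyCoord_dyadic {N k : ℕ} (hk : k ≤ 2^N) :
    fareyCoord ((k : ℝ) / 2^N) = ((fareyDyadic N k : ℚ) : ℝ) :=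
  le_antisymm (fareyCoord_le (by positivity) hk le_rfl) (le_fareyCoord hk le_rfl)

lemma fareyCoord_zero : fareyCoord 0 = 0 := by
  have := fareyCoord_dyadic (N := 0) (k := 0) (by norm_num)
  simpa [fareyDyadic_zero] using this

lemma fareyCoord_one : fareyCoord 1 = 1 := by
  have := fareyCoord_dyadic (N := 0) (k := 1) (by norm_num)
  simpa [fareyDyadic] using this

lemma fareyCoord_mono {α β : ℝ} (hα : 0 ≤ α) (h : α ≤ β) :
    fareyCoord α ≤ fareyCoord β := by
  apply csSup_le_csSup (bddAbove_fareySet β) (nonempty_fareySet hα)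
  rintro x ⟨n, m, hm, hle, rfl⟩
  exact ⟨n, m, hm, le_trans hle h, rfl⟩

lemma fd_gap_multi {N : ℕ} : ∀ j : ℕ, j ≤ 2^N → ∀ k : ℕ, k ≤ j →
    fareyDyadic N j ≤ fareyDyadic N k + ((j : ℚ) - (k : ℚ)) / (N + 1 : ℚ) := by
  intro j
  induction j with
  | zero => intro _ k hk; interval_cases k; simp
  | succ j ih =>
    intro hj k hk
    rcases Nat.lt_or_ge k (j+1) with hlt | hge
    · have h1 := ih (by omega) k (by omega)
      have h2 := fd_step_gap (n := N) (m := j) (by omega)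
      have hN : (0:ℚ) < (N:ℚ) + 1 := by positivity
      have : ((j:ℚ) + 1 - (k:ℚ)) / (N + 1 : ℚ)
          = ((j:ℚ) - (k:ℚ)) / (N + 1 : ℚ) + 1 / (N + 1 : ℚ) := by ring
      push_cast
      rw [this]
      push_cast at h1 h2
      linarith
    · have : k = j + 1 := by omega
      subst this
      simp

lemma fareyCoord_gap {N : ℕ} {α x : ℝ} (hα0 : 0 ≤ α) (hα1 : α ≤ 1) (hx1 : x ≤ 1)
    (hax : α ≤ x) (hxa : x ≤ α + 1 / 2^N) :
    fareyCoord x - fareyCoord α ≤ 3 / (N + 1 : ℝ) := by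
  have h2N : (0:ℝ) < 2^N := by positivity
  set k : ℕ := ⌊α * 2^N⌋.toNat with hkdef
  have hfl0 : (0:ℤ) ≤ ⌊α * 2^N⌋ := Int.floor_nonneg.mpr (by positivity)
  have hkZ : (k : ℤ) = ⌊α * 2^N⌋ := Int.toNat_of_nonneg hfl0
  have hkR : (k : ℝ) ≤ α * 2^N := by
    have := Int.floor_le (α * 2^N)
    rw [← hkZ] at this
    exact_mod_cast this
  have hkR2 : α * 2^N < (k : ℝ) + 1 := by
    have := Int.lt_floor_add_one (α * 2^N)
    rw [← hkZ] at this
    exact_mod_cast this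
  have hk2N : k ≤ 2^N := by
    have : (k : ℝ) ≤ 2^N := le_trans hkR (by nlinarith)
    exact_mod_cast this
  have hka : (k : ℝ) / 2^N ≤ α := by
    rw [div_le_iff₀ h2N]; linarith
  set j : ℕ := min (k + 2) (2^N) with hjdef
  have hj2N : j ≤ 2^N := min_le_right _ _
  have hkj : k ≤ j := le_min (by omega) hk2N
  have hxj : x ≤ (j : ℝ) / 2^N := by
    have hc : (j:ℝ) = min ((k:ℝ)+2) ((2:ℝ)^N) := by
      rw [hjdef]
      push_cast [Nat.cast_min]
      norm_num
    rw [le_div_iff₀ h2N, hc]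
    have e : (α + 1/2^N) * 2^N = α * 2^N + 1 := by field_simp
    apply le_min
    · nlinarith [hkR2, e, mul_le_mul_of_nonneg_right hxa h2N.le]
    · nlinarith [mul_le_mul_of_nonneg_right hx1 h2N.le]
  have hx0 : 0 ≤ x := le_trans hα0 hax
  have h1 : fareyCoord x ≤ ((fareyDyadic N j : ℚ) : ℝ) := fareyCoord_le hx0 hj2N hxj
  have h2 : ((fareyDyadic N k : ℚ) : ℝ) ≤ fareyCoord α := le_fareyCoord hk2N hka
  have h3 : fareyDyadic N j ≤ fareyDyadic N k + ((j : ℚ) - (k : ℚ)) / (N + 1 : ℚ) :=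
    fd_gap_multi j hj2N k hkj
  have hjk2 : (j : ℚ) - (k : ℚ) ≤ 3 := by
    have : j ≤ k + 2 := min_le_left _ _
    have h' : (j:ℚ) ≤ (k:ℚ) + 2 := by exact_mod_cast this
    linarith
  have hNq : (0:ℚ) < (N:ℚ) + 1 := by positivity
  have h4 : fareyDyadic N j ≤ fareyDyadic N k + 3 / (N + 1 : ℚ) := by
    have hdiv : ((j : ℚ) - (k : ℚ)) / (N + 1 : ℚ) ≤ 3 / (N + 1 : ℚ) := by gcongr
    linarith
  have h4' := (Rat.cast_le (K := ℝ)).mpr h4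
  push_cast at h4'
  linarith [h1, h2, h4']

lemma fareyCoord_strictMonoOn : StrictMonoOn fareyCoord (Set.Icc 0 1) := by
  rintro α ⟨hα0, hα1⟩ β ⟨hβ0, hβ1⟩ hαβ
  have hβα : (0:ℝ) < β - α := by linarith
  obtain ⟨N, hN⟩ := pow_unbounded_of_one_lt (2 / (β - α)) (by norm_num : (1:ℝ) < 2)
  have h2N : (0:ℝ) < 2^N := by positivity
  have hgap : 2 < (β - α) * 2^N := by
    have := (div_lt_iff₀ hβα).mp hN
    linarith
  set k : ℕ := ⌈α * 2^N⌉.toNat with hkdef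
  have hcl0 : (0:ℤ) ≤ ⌈α * 2^N⌉ := Int.ceil_nonneg (by positivity)
  have hkZ : (k:ℤ) = ⌈α * 2^N⌉ := Int.toNat_of_nonneg hcl0
  have hk1 : α * 2^N ≤ (k:ℝ) := by
    have := Int.le_ceil (α * 2^N)
    rw [← hkZ] at this
    exact_mod_cast this
  have hk2 : (k:ℝ) < α * 2^N + 1 := by
    have := Int.ceil_lt_add_one (α * 2^N)
    rw [← hkZ] at this
    exact_mod_cast this
  have hkα : α ≤ (k:ℝ)/2^N := by rw [le_div_iff₀ h2N]; linarith
  have hk1β : ((k:ℝ)+1)/2^N < β := by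
    rw [div_lt_iff₀ h2N]
    have hh : (β-α) * 2^N = β * 2^N - α * 2^N := by ring
    linarith
  have hk12N : k + 1 ≤ 2^N := by
    have hr : ((k:ℝ)+1) < 2^N := by
      have h1 : ((k:ℝ)+1)/2^N < 1 := lt_of_lt_of_le hk1β hβ1
      rw [div_lt_one h2N] at h1
      exact h1
    have : ((k+1 : ℕ) : ℝ) < ((2^N : ℕ) : ℝ) := by push_cast; linarith
    exact_mod_cast this.le
  calc fareyCoord α ≤ ((fareyDyadic N k : ℚ):ℝ) := fareyCoord_le hα0 (by omega) hkα
    _ < ((fareyDyadic N (k+1) : ℚ):ℝ) := by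
        exact_mod_cast fd_lt_fd (Nat.lt_succ_self k) hk12N
    _ ≤ fareyCoord β := by
        apply le_fareyCoord hk12N
        push_cast
        linarith

lemma fareyCoord_continuousOn : ContinuousOn fareyCoord (Set.Icc 0 1) := by
  rw [Metric.continuousOn_iff]
  rintro a ⟨ha0, ha1⟩ ε hε
  obtain ⟨N, hN⟩ := exists_nat_gt (3/ε)
  have hNpos : (0:ℝ) < (N:ℝ)+1 := by positivity
  have hN1 : 3 / ((N:ℝ)+1) < ε := by
    rw [div_lt_iff₀ hNpos]
    have h := (div_lt_iff₀ hε).mp (show 3/ε < (N:ℝ)+1 by linarith)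
    linarith
  refine ⟨1/2^N, by positivity, ?_⟩
  rintro x ⟨hx0, hx1⟩ hdist
  rw [Real.dist_eq] at hdist ⊢
  have habs := abs_lt.mp hdist
  rcases le_total a x with hax | hxa
  · have h1 : fareyCoord x - fareyCoord a ≤ 3/((N:ℝ)+1) :=
      fareyCoord_gap ha0 ha1 hx1 hax (by linarith [habs.2])
    have h2 : fareyCoord a ≤ fareyCoord x := fareyCoord_mono ha0 hax
    rw [abs_of_nonneg (by linarith)]
    linarith
  · have h1 : fareyCoord a - fareyCoord x ≤ 3/((N:ℝ)+1) :=
      fareyCoord_gap hx0 hx1 ha1 hxa (by linarith [habs.1])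
    have h2 : fareyCoord x ≤ fareyCoord a := fareyCoord_mono hx0 hxa
    rw [abs_of_nonpos (by linarith)]
    linarith

/-- The Farey coordinate is a continuous, strictly increasing bijection of
`[0, 1]` onto itself. -/
theorem stmt_19 :
    ContinuousOn fareyCoord (Set.Icc 0 1) ∧
    StrictMonoOn fareyCoord (Set.Icc 0 1) ∧
    Set.BijOn fareyCoord (Set.Icc 0 1) (Set.Icc 0 1) := by
  have hmaps : Set.MapsTo fareyCoord (Set.Icc 0 1) (Set.Icc 0 1) := by
    rintro x ⟨hx0, hx1⟩
    constructor
    · have := fareyCoord_mono le_rfl hx0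
      rwa [fareyCoord_zero] at this
    · have := fareyCoord_mono hx0 hx1
      rwa [fareyCoord_one] at this
  refine ⟨fareyCoord_continuousOn, fareyCoord_strictMonoOn,
    hmaps, fareyCoord_strictMonoOn.injOn, ?_⟩
  intro y hy
  have h := intermediate_value_Icc (zero_le_one) fareyCoord_continuousOn
  rw [fareyCoord_zero, fareyCoord_one] at h
  exact h hy
end
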